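/- arXiv:2405.04864 — 2 statements merged into one kernel-verified Lean document; each statement's English description precedes it below -/
import Mathlib

section
/- Let p(x) = Σ_{i=1}^K α_i N(x; μ_i, σ_i²) and q(x) = Σ_{j=1}^L β_j N(x; ν_j, τ_j²) be two finite mixtures of univariate Gaussian densities with positive mixing weights summing to 1, with all component pairs (μ_i, σ_i²) distinct within each mixture. If p = q as functions on ℝ, then K = L and, after ordering components lexicographically by (σ_i², μ_i), one has α_i = β_i, μ_i = ν_i, and σ_i² = τ_i² for all i. -/
/-- Univariate Gaussian density with mean `μ` and variance `σ2`. -/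
noncomputable def gaussPDF (μ σ2 x : ℝ) : ℝ :=
  (Real.sqrt (2 * Real.pi * σ2))⁻¹ * Real.exp (-(x - μ) ^ 2 / (2 * σ2))

open Filter Finset

lemma gaussPDF_pos {m s : ℝ} (hs : 0 < s) (x : ℝ) : 0 < gaussPDF m s x := by
  have h2 : 0 < 2 * Real.pi * s := by positivity
  exact mul_pos (inv_pos.2 (Real.sqrt_pos.2 h2)) (Real.exp_pos _)

lemma gauss_ratio_tendsto {m1 s1 m2 s2 : ℝ} (hs1 : 0 < s1) (hs2 : 0 < s2)
    (hlt : s1 < s2 ∨ (s1 = s2 ∧ m1 < m2)) :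
    Tendsto (fun x => gaussPDF m1 s1 x / gaussPDF m2 s2 x) atTop (nhds 0) := by
  have hD : Tendsto
      (fun x => -(x - m1) ^ 2 / (2 * s1) - -(x - m2) ^ 2 / (2 * s2)) atTop atBot := by
    rcases hlt with h | ⟨he, hm⟩
    · have ha : (1 / (2 * s2) - 1 / (2 * s1)) < 0 := by
        have : 1 / (2 * s2) < 1 / (2 * s1) := by
          apply one_div_lt_one_div_of_lt <;> nlinarith
        linarith
      have h1 : Tendsto (fun x : ℝ => (1/(2*s2) - 1/(2*s1)) * x + (m1/s1 - m2/s2))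
          atTop atBot :=
        tendsto_atBot_add_const_right _ _ ((tendsto_const_mul_atBot_of_neg ha).2 tendsto_id)
      have h2 : Tendsto (fun x : ℝ =>
          x * ((1/(2*s2) - 1/(2*s1)) * x + (m1/s1 - m2/s2)) + (m2^2/(2*s2) - m1^2/(2*s1)))
          atTop atBot :=
        tendsto_atBot_add_const_right _ _ (tendsto_id.atTop_mul_atBot₀ h1)
      refine h2.congr fun x => ?_
      field_simp
      ring
    · subst he
      have hc : (m1 - m2) / s1 < 0 := div_neg_of_neg_of_pos (by linarith) hs1
      have h1 : Tendsto (fun x : ℝ => (m1 - m2)/s1 * x + (m2^2 - m1^2)/(2*s1)) atTop atBot :=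
        tendsto_atBot_add_const_right _ _ ((tendsto_const_mul_atBot_of_neg hc).2 tendsto_id)
      refine h1.congr fun x => ?_
      field_simp
      ring
  have hE : Tendsto
      (fun x => Real.exp (-(x - m1) ^ 2 / (2 * s1) - -(x - m2) ^ 2 / (2 * s2)))
      atTop (nhds 0) := Real.tendsto_exp_atBot.comp hD
  have hmain := hE.const_mul (Real.sqrt (2 * Real.pi * s2) / Real.sqrt (2 * Real.pi * s1))
  rw [mul_zero] at hmain
  refine hmain.congr fun x => ?_
  unfold gaussPDF
  rw [Real.exp_sub]
  have hq1 : (0:ℝ) < Real.sqrt (2 * Real.pi * s1) := Real.sqrt_pos.2 (by positivity)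
  have hq2 : (0:ℝ) < Real.sqrt (2 * Real.pi * s2) := Real.sqrt_pos.2 (by positivity)
  have he2 : Real.exp (-(x - m2) ^ 2 / (2 * s2)) ≠ 0 := (Real.exp_pos _).ne'
  field_simp

/-- Linear independence of Gaussian densities with distinct parameters. -/
lemma gauss_li (t : Finset (ℝ × ℝ)) (c : ℝ × ℝ → ℝ) (hs : ∀ p ∈ t, 0 < p.2)
    (h : ∀ x, ∑ p ∈ t, c p * gaussPDF p.1 p.2 x = 0) :
    ∀ p ∈ t, c p = 0 := by
  by_contra hcon
  push_neg at hcon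
  obtain ⟨p₁, hp₁, hcp₁⟩ := hcon
  classical
  set S := t.filter fun p => c p ≠ 0 with hS
  have hSne : S.Nonempty := ⟨p₁, Finset.mem_filter.2 ⟨hp₁, hcp₁⟩⟩
  obtain ⟨q, hqS, hqmax⟩ := S.exists_max_image (fun p => toLex (p.2, p.1)) hSne
  have hqt : q ∈ t := (Finset.mem_filter.1 hqS).1
  have hcq : c q ≠ 0 := (Finset.mem_filter.1 hqS).2
  have hq2 : 0 < q.2 := hs q hqt
  have hlim : Tendsto (fun x => ∑ p ∈ t, c p * (gaussPDF p.1 p.2 x / gaussPDF q.1 q.2 x))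
      atTop (nhds (∑ p ∈ t, if p = q then c q else 0)) := by
    apply tendsto_finset_sum
    intro p hp
    by_cases hpq : p = q
    · subst hpq
      rw [if_pos rfl]
      refine Tendsto.congr (fun x => ?_) (tendsto_const_nhds (x := c p))
      rw [div_self (gaussPDF_pos (hs p hp) x).ne', mul_one]
    · rw [if_neg hpq]
      by_cases hcp : c p = 0
      · simpa [hcp] using (tendsto_const_nhds :
          Tendsto (fun _ : ℝ => (0:ℝ)) atTop (nhds 0))
      · have hpS : p ∈ S := Finset.mem_filter.2 ⟨hp, hcp⟩
        have hle := hqmax p hpS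
        have hne : toLex ((p.2, p.1) : ℝ × ℝ) ≠ toLex ((q.2, q.1) : ℝ × ℝ) := by
          intro hcontra
          apply hpq
          have h' : ((p.2, p.1) : ℝ × ℝ) = (q.2, q.1) := toLex.injective hcontra
          have h1 : p.2 = q.2 := congrArg Prod.fst h'
          have h2 : p.1 = q.1 := congrArg Prod.snd h'
          exact Prod.ext h2 h1
        have hlt : toLex ((p.2, p.1) : ℝ × ℝ) < toLex ((q.2, q.1) : ℝ × ℝ) :=
          lt_of_le_of_ne hle hne
        rw [Prod.Lex.lt_iff] at hlt
        have := (gauss_ratio_tendsto (hs p hp) hq2 hlt).const_mul (c p)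
        simpa using this
  have hzero : ∀ x : ℝ, ∑ p ∈ t, c p * (gaussPDF p.1 p.2 x / gaussPDF q.1 q.2 x) = 0 := by
    intro x
    have hrw : ∑ p ∈ t, c p * (gaussPDF p.1 p.2 x / gaussPDF q.1 q.2 x)
        = (∑ p ∈ t, c p * gaussPDF p.1 p.2 x) / gaussPDF q.1 q.2 x := by
      rw [Finset.sum_div]
      exact Finset.sum_congr rfl fun p _ => (mul_div_assoc _ _ _).symm
    rw [hrw, h x, zero_div]
  have hlim0 : Tendsto (fun x => ∑ p ∈ t, c p * (gaussPDF p.1 p.2 x / gaussPDF q.1 q.2 x))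
      atTop (nhds 0) := by
    refine Tendsto.congr (fun x => (hzero x).symm) tendsto_const_nhds
  have hcq0 : (∑ p ∈ t, if p = q then c q else 0) = 0 := tendsto_nhds_unique hlim hlim0
  rw [Finset.sum_ite_eq' t q (fun _ => c q), if_pos hqt] at hcq0
  exact hcq hcq0

/-- Identifiability of finite univariate Gaussian mixtures with lexicographically
ordered distinct components. -/
theorem gaussian_mixture_identifiable
    (K L : ℕ) (α μ σ2 : Fin K → ℝ) (β ν τ2 : Fin L → ℝ)
    (hα : ∀ i, 0 < α i) (hβ : ∀ j, 0 < β j)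
    (hσ : ∀ i, 0 < σ2 i) (hτ : ∀ j, 0 < τ2 j)
    (hsumα : ∑ i, α i = 1) (hsumβ : ∑ j, β j = 1)
    (hlexp : ∀ i j : Fin K, i < j →
      σ2 i < σ2 j ∨ (σ2 i = σ2 j ∧ μ i < μ j))
    (hlexq : ∀ i j : Fin L, i < j →
      τ2 i < τ2 j ∨ (τ2 i = τ2 j ∧ ν i < ν j))
    (heq : ∀ x : ℝ, ∑ i, α i * gaussPDF (μ i) (σ2 i) x
      = ∑ j, β j * gaussPDF (ν j) (τ2 j) x) :
    ∃ h : K = L, ∀ i : Fin K,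
      α i = β (Fin.cast h i) ∧ μ i = ν (Fin.cast h i) ∧ σ2 i = τ2 (Fin.cast h i) := by
  classical
  set P : Fin K → ℝ × ℝ := fun i => (μ i, σ2 i) with hPdef
  set Q : Fin L → ℝ × ℝ := fun j => (ν j, τ2 j) with hQdef
  have hPinj : ∀ i j, P i = P j → i = j := by
    intro i j hij
    have h1 : μ i = μ j := congrArg Prod.fst hij
    have h2 : σ2 i = σ2 j := congrArg Prod.snd hij
    by_contra hne
    rcases Ne.lt_or_gt hne with h | h
    · rcases hlexp i j h with h' | ⟨_, h'⟩ <;> linarith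
    · rcases hlexp j i h with h' | ⟨_, h'⟩ <;> linarith
  have hQinj : ∀ i j, Q i = Q j → i = j := by
    intro i j hij
    have h1 : ν i = ν j := congrArg Prod.fst hij
    have h2 : τ2 i = τ2 j := congrArg Prod.snd hij
    by_contra hne
    rcases Ne.lt_or_gt hne with h | h
    · rcases hlexq i j h with h' | ⟨_, h'⟩ <;> linarith
    · rcases hlexq j i h with h' | ⟨_, h'⟩ <;> linarith
  set t : Finset (ℝ × ℝ) := Finset.image P Finset.univ ∪ Finset.image Q Finset.univ with htdef
  have hPt : ∀ i, P i ∈ t := fun i =>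
    Finset.mem_union_left _ (Finset.mem_image_of_mem P (Finset.mem_univ i))
  have hQt : ∀ j, Q j ∈ t := fun j =>
    Finset.mem_union_right _ (Finset.mem_image_of_mem Q (Finset.mem_univ j))
  set c : ℝ × ℝ → ℝ := fun p =>
    (∑ i, if P i = p then α i else 0) - (∑ j, if Q j = p then β j else 0) with hcdef
  have hsumP : ∀ x : ℝ,
      ∑ p ∈ t, (∑ i, if P i = p then α i else 0) * gaussPDF p.1 p.2 x
        = ∑ i, α i * gaussPDF (μ i) (σ2 i) x := by
    intro x
    calc ∑ p ∈ t, (∑ i, if P i = p then α i else 0) * gaussPDF p.1 p.2 x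
        = ∑ p ∈ t, ∑ i, (if P i = p then α i * gaussPDF p.1 p.2 x else 0) := by
          refine Finset.sum_congr rfl fun p _ => ?_
          rw [Finset.sum_mul]
          exact Finset.sum_congr rfl fun i _ => by split <;> simp
      _ = ∑ i, ∑ p ∈ t, (if P i = p then α i * gaussPDF p.1 p.2 x else 0) := Finset.sum_comm
      _ = ∑ i, α i * gaussPDF (μ i) (σ2 i) x := by
          refine Finset.sum_congr rfl fun i _ => ?_
          rw [Finset.sum_ite_eq t (P i) (fun p => α i * gaussPDF p.1 p.2 x), if_pos (hPt i)]
  have hsumQ : ∀ x : ℝ,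
      ∑ p ∈ t, (∑ j, if Q j = p then β j else 0) * gaussPDF p.1 p.2 x
        = ∑ j, β j * gaussPDF (ν j) (τ2 j) x := by
    intro x
    calc ∑ p ∈ t, (∑ j, if Q j = p then β j else 0) * gaussPDF p.1 p.2 x
        = ∑ p ∈ t, ∑ j, (if Q j = p then β j * gaussPDF p.1 p.2 x else 0) := by
          refine Finset.sum_congr rfl fun p _ => ?_
          rw [Finset.sum_mul]
          exact Finset.sum_congr rfl fun j _ => by split <;> simp
      _ = ∑ j, ∑ p ∈ t, (if Q j = p then β j * gaussPDF p.1 p.2 x else 0) := Finset.sum_comm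
      _ = ∑ j, β j * gaussPDF (ν j) (τ2 j) x := by
          refine Finset.sum_congr rfl fun j _ => ?_
          rw [Finset.sum_ite_eq t (Q j) (fun p => β j * gaussPDF p.1 p.2 x), if_pos (hQt j)]
  have hzero : ∀ x : ℝ, ∑ p ∈ t, c p * gaussPDF p.1 p.2 x = 0 := by
    intro x
    have : ∑ p ∈ t, c p * gaussPDF p.1 p.2 x
        = ∑ p ∈ t, ((∑ i, if P i = p then α i else 0) * gaussPDF p.1 p.2 x
            - (∑ j, if Q j = p then β j else 0) * gaussPDF p.1 p.2 x) := by
      refine Finset.sum_congr rfl fun p _ => ?_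
      rw [hcdef]
      ring
    rw [this, Finset.sum_sub_distrib, hsumP x, hsumQ x, heq x, sub_self]
  have hspos : ∀ p ∈ t, 0 < p.2 := by
    intro p hp
    rcases Finset.mem_union.1 hp with h | h
    · obtain ⟨i, _, rfl⟩ := Finset.mem_image.1 h
      exact hσ i
    · obtain ⟨j, _, rfl⟩ := Finset.mem_image.1 h
      exact hτ j
  have hc0 := gauss_li t c hspos hzero
  have key : ∀ i : Fin K, α i = ∑ j, if Q j = P i then β j else 0 := by
    intro i
    have hcP := hc0 (P i) (hPt i)
    have h1 : (∑ i', if P i' = P i then α i' else 0) = α i := by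
      have : ∀ i' : Fin K, (if P i' = P i then α i' else 0) = (if i' = i then α i' else 0) := by
        intro i'
        by_cases h : i' = i
        · simp [h]
        · rw [if_neg h, if_neg (fun hh => h (hPinj _ _ hh))]
      rw [Finset.sum_congr rfl fun i' _ => this i',
        Finset.sum_ite_eq' Finset.univ i α, if_pos (Finset.mem_univ i)]
    rw [hcdef] at hcP
    simp only at hcP
    rw [h1] at hcP
    linarith
  have keyq : ∀ j : Fin L, β j = ∑ i, if P i = Q j then α i else 0 := by
    intro j
    have hcQ := hc0 (Q j) (hQt j)
    have h1 : (∑ j', if Q j' = Q j then β j' else 0) = β j := by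
      have : ∀ j' : Fin L, (if Q j' = Q j then β j' else 0) = (if j' = j then β j' else 0) := by
        intro j'
        by_cases h : j' = j
        · simp [h]
        · rw [if_neg h, if_neg (fun hh => h (hQinj _ _ hh))]
      rw [Finset.sum_congr rfl fun j' _ => this j',
        Finset.sum_ite_eq' Finset.univ j β, if_pos (Finset.mem_univ j)]
    rw [hcdef] at hcQ
    simp only at hcQ
    rw [h1] at hcQ
    linarith
  have hex : ∀ i : Fin K, ∃ j, Q j = P i := by
    intro i
    by_contra hno
    push_neg at hno
    have : (∑ j, if Q j = P i then β j else 0) = 0 :=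
      Finset.sum_eq_zero fun j _ => if_neg (hno j)
    have := (key i).trans this
    exact absurd this (hα i).ne'
  have hexq : ∀ j : Fin L, ∃ i, P i = Q j := by
    intro j
    by_contra hno
    push_neg at hno
    have : (∑ i, if P i = Q j then α i else 0) = 0 :=
      Finset.sum_eq_zero fun i _ => if_neg (hno i)
    have := (keyq j).trans this
    exact absurd this (hβ j).ne'
  choose f hf using hex
  choose g hg using hexq
  have hαβ : ∀ i, α i = β (f i) := by
    intro i
    rw [key i]
    have : ∀ j : Fin L, (if Q j = P i then β j else 0) = (if j = f i then β j else 0) := by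
      intro j
      by_cases h : j = f i
      · subst h; rw [if_pos (hf i), if_pos rfl]
      · rw [if_neg h, if_neg (fun hh => h (hQinj _ _ (hh.trans (hf i).symm)))]
    rw [Finset.sum_congr rfl fun j _ => this j,
      Finset.sum_ite_eq' Finset.univ (f i) β, if_pos (Finset.mem_univ _)]
  have hμf : ∀ i, ν (f i) = μ i := fun i => congrArg Prod.fst (hf i)
  have hσf : ∀ i, τ2 (f i) = σ2 i := fun i => congrArg Prod.snd (hf i)
  have hfg : ∀ j, f (g j) = j := fun j => hQinj _ _ (by rw [hf (g j), hg j])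
  have hgf : ∀ i, g (f i) = i := fun i => hPinj _ _ (by rw [hg (f i), hf i])
  have hbij : Function.Bijective f :=
    ⟨fun a b hab => by rw [← hgf a, hab, hgf b], fun j => ⟨g j, hfg j⟩⟩
  have h : K = L := by
    have := Fintype.card_of_bijective hbij
    simpa using this
  have hmono : StrictMono f := by
    intro i i' hii
    rcases lt_trichotomy (f i) (f i') with h1 | h1 | h1
    · exact h1
    · exfalso
      have : i = i' := by rw [← hgf i, h1, hgf i']
      exact hii.ne this
    · exfalso
      have hc1 := hlexq _ _ h1
      rw [hσf, hσf, hμf, hμf] at hc1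
      rcases hlexp i i' hii with ha | ⟨ha, hb⟩ <;> rcases hc1 with hc | ⟨hc, hd⟩ <;> linarith
  have hcastmono : StrictMono (fun i : Fin K => Fin.cast h i) :=
    (Fin.castOrderIso h).strictMono
  have hcastsurj : Function.Surjective (fun i : Fin K => Fin.cast h i) := by
    intro j
    exact ⟨Fin.cast h.symm j, by ext; simp⟩
  have hr : Set.range f = Set.range (fun i : Fin K => Fin.cast h i) := by
    rw [hbij.2.range_eq, hcastsurj.range_eq]
  haveI : WellFoundedLT (Fin K) := inferInstance
  have hfeq : ∀ i, f i = Fin.cast h i := fun i =>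
    congrFun ((hmono.range_inj hcastmono).1 hr) i
  refine ⟨h, fun i => ?_⟩
  rw [← hfeq i]
  exact ⟨hαβ i, (hμf i).symm, (hσf i).symm⟩
end

section
/- If σ_K² is strictly the largest variance among the components of a univariate Gaussian mixture p(x) = Σ_{i=1}^K α_i N(x; μ_i, σ_i²) (with component (μ_K, σ_K²) unique), then lim_{x→∞} σ_K · p(x) / N(x; μ_K, σ_K²) = α_K · σ_K, i.e., lim_{x→∞} p(x)/N(x; μ_K, σ_K²) = α_K. -/
open Filter Real

lemma gaussPDF_pos_s1 (μ σ2 x : ℝ) (h : 0 < σ2) : 0 < gaussPDF μ σ2 x := by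
  unfold gaussPDF
  have : 0 < 2 * Real.pi * σ2 := by positivity
  positivity

lemma quad_atBot {a : ℝ} (b c : ℝ) (ha : a < 0) :
    Tendsto (fun x : ℝ => a * x ^ 2 + b * x + c) atTop atBot := by
  have h1 : Tendsto (fun x : ℝ => a + b / x + c / x ^ 2) atTop (nhds a) := by
    have := (tendsto_const_nhds (x := a) (f := atTop (α := ℝ))).add
      ((tendsto_const_nhds (x := b)).div_atTop tendsto_id) |>.add
      ((tendsto_const_nhds (x := c)).div_atTop (tendsto_pow_atTop two_ne_zero))
    simpa using this
  have h2 : Tendsto (fun x : ℝ => x ^ 2 * (a + b / x + c / x ^ 2)) atTop atBot :=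
    (tendsto_pow_atTop two_ne_zero).atTop_mul_neg ha h1
  refine h2.congr' ?_
  filter_upwards [eventually_gt_atTop (0 : ℝ)] with x hx
  field_simp

lemma lin_atBot {b : ℝ} (c : ℝ) (hb : b < 0) :
    Tendsto (fun x : ℝ => b * x + c) atTop atBot := by
  have h2 : Tendsto (fun x : ℝ => b * x) atTop atBot := by
    simpa [mul_comm] using tendsto_id.atTop_mul_neg hb
      (tendsto_const_nhds (x := b) (f := atTop (α := ℝ)))
  exact tendsto_atBot_add_const_right atTop c h2

lemma ratio_eq (μi σi μK σK x : ℝ) (hσi : 0 < σi) (hσK : 0 < σK) :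
    gaussPDF μi σi x / gaussPDF μK σK x =
    (Real.sqrt (2 * Real.pi * σK) / Real.sqrt (2 * Real.pi * σi)) *
    Real.exp ((1 / (2 * σK) - 1 / (2 * σi)) * x ^ 2 + (μi / σi - μK / σK) * x
      + (μK ^ 2 / (2 * σK) - μi ^ 2 / (2 * σi))) := by
  have hA : Real.sqrt (2 * Real.pi * σi) ≠ 0 := by
    positivity
  have hB : Real.sqrt (2 * Real.pi * σK) ≠ 0 := by
    positivity
  unfold gaussPDF
  rw [mul_div_mul_comm, inv_div_inv, ← Real.exp_sub]
  congr 1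
  field_simp
  ring

/-- The last (lexicographically largest) component dominates the mixture at infinity:
`p(x) / N(x; μ_K, σ_K²) → α_K` as `x → ∞`. -/
theorem mixture_div_last_component_tendsto
    (K : ℕ) (α μ σ2 : Fin (K + 1) → ℝ)
    (hα : ∀ i, 0 < α i) (hσ : ∀ i, 0 < σ2 i) (hsum : ∑ i, α i = 1)
    (hlast : ∀ i : Fin (K + 1), i < Fin.last K →
      σ2 i < σ2 (Fin.last K) ∨ (σ2 i = σ2 (Fin.last K) ∧ μ i < μ (Fin.last K))) :
    Filter.Tendsto
      (fun x : ℝ => (∑ i, α i * gaussPDF (μ i) (σ2 i) x)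
        / gaussPDF (μ (Fin.last K)) (σ2 (Fin.last K)) x)
      Filter.atTop (nhds (α (Fin.last K))) := by
  set L := Fin.last K with hL
  have key : Tendsto
      (fun x : ℝ => ∑ i, α i * (gaussPDF (μ i) (σ2 i) x / gaussPDF (μ L) (σ2 L) x))
      atTop (nhds (∑ i, if i = L then α L else 0)) := by
    refine tendsto_finset_sum _ (fun i _ => ?_)
    by_cases hi : i = L
    · subst hi
      simp only [if_pos rfl]
      have : (fun x : ℝ => α L * (gaussPDF (μ L) (σ2 L) x / gaussPDF (μ L) (σ2 L) x))
          = fun _ => α L := by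
        funext x
        rw [div_self (gaussPDF_pos_s1 _ _ _ (hσ L)).ne', mul_one]
      rw [this]
      exact tendsto_const_nhds
    · simp only [if_neg hi]
      have hlt : i < L := Fin.lt_last_iff_ne_last.mpr hi
      have hexp : Tendsto (fun x : ℝ =>
          (1 / (2 * σ2 L) - 1 / (2 * σ2 i)) * x ^ 2 + (μ i / σ2 i - μ L / σ2 L) * x
            + (μ L ^ 2 / (2 * σ2 L) - μ i ^ 2 / (2 * σ2 i))) atTop atBot := by
        rcases hlast i hlt with h | ⟨heq, hμ⟩
        · refine quad_atBot _ _ ?_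
          have : 1 / (2 * σ2 L) < 1 / (2 * σ2 i) := by
            apply one_div_lt_one_div_of_lt (by linarith [hσ i]) (by linarith)
          linarith
        · rw [heq]
          simp only [sub_self, zero_mul, zero_add]
          refine lin_atBot _ ?_
          rw [div_sub_div_same]
          exact div_neg_of_neg_of_pos (by linarith) (hσ L)
      have h0 : Tendsto (fun x : ℝ => α i *
          ((Real.sqrt (2 * Real.pi * σ2 L) / Real.sqrt (2 * Real.pi * σ2 i)) *
            Real.exp ((1 / (2 * σ2 L) - 1 / (2 * σ2 i)) * x ^ 2
              + (μ i / σ2 i - μ L / σ2 L) * x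
              + (μ L ^ 2 / (2 * σ2 L) - μ i ^ 2 / (2 * σ2 i))))) atTop (nhds 0) := by
        have := (Real.tendsto_exp_atBot.comp hexp).const_mul
          (α i * (Real.sqrt (2 * Real.pi * σ2 L) / Real.sqrt (2 * Real.pi * σ2 i)))
        simpa [mul_assoc] using this
      refine h0.congr (fun x => ?_)
      rw [ratio_eq _ _ _ _ _ (hσ i) (hσ L)]
  have hsum' : (∑ i, if i = L then α L else 0) = α L := by
    simp [Finset.sum_ite_eq']
  rw [hsum'] at key
  refine key.congr (fun x => ?_)
  rw [Finset.sum_div]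
  congr 1
  funext i
  rw [mul_div_assoc]
end
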